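/- arXiv:2511.11178 — 4 statements merged into one kernel-verified Lean document; each statement's English description precedes it below -/
import Mathlib

section
/- Let m, d₁, d₂ be positive integers and let Θ = [A B] be a real m × (d₁+d₂) matrix with blocks A ∈ ℝ^{m×d₁} and B ∈ ℝ^{m×d₂}, and suppose ΘᵀΘ is invertible. For y ∈ ℝ^m let Ξ̂ = (ΘᵀΘ)⁻¹Θᵀ y be the least-squares estimate, write Ξ̂ = (Ξ̂₁, Ξ̂₂) with Ξ̂₁ ∈ ℝ^{d₁}, Ξ̂₂ ∈ ℝ^{d₂}, and let E = (ΘᵀΘ)⁻¹ with block decomposition E = [[E₁₁, E₁₂],[E₂₁, E₂₂]] (E₁₁ ∈ ℝ^{d₁×d₁}). Then E₁₁ is invertible and the updated vector Ξ̂ − E[:,1] E₁₁⁻¹ Ξ̂₁ (where E[:,1] = [E₁₁; E₂₁] denotes the first block column of E) equals (0_{d₁}, (BᵀB)⁻¹Bᵀ y); i.e., one iteration of the SKF sparsity update with a non-informative prior returns exactly the Sindy estimate: zero on the thresholded components and the least-squares regression onto the remaining columns on the others. -/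
open Matrix

lemma gram_posDef_of_injective {m n : Type*} [Fintype m] [Fintype n]
    (M : Matrix m n ℝ) (hM : Function.Injective M.mulVec) : (Mᵀ * M).PosDef := by
  refine posDef_iff_dotProduct_mulVec.mpr ⟨?_, ?_⟩
  · simpa [conjTranspose_eq_transpose_of_trivial] using isHermitian_conjTranspose_mul_self M
  · intro x hx
    have hMx : M *ᵥ x ≠ 0 := by
      intro h
      exact hx (hM (by simpa using h))
    have key : star x ⬝ᵥ (Mᵀ * M) *ᵥ x = (M *ᵥ x) ⬝ᵥ (M *ᵥ x) := by
      rw [star_trivial, ← mulVec_mulVec, dotProduct_mulVec, vecMul_transpose]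
    rw [key]
    have h0 : (M *ᵥ x) ⬝ᵥ (M *ᵥ x) ≠ 0 := by
      simpa [dotProduct_self_eq_zero] using hMx
    have h1 : 0 ≤ (M *ᵥ x) ⬝ᵥ (M *ᵥ x) :=
      Finset.sum_nonneg fun i _ => mul_self_nonneg _
    exact lt_of_le_of_ne h1 (Ne.symm h0)

/-- One iteration of the SKF sparsity update with a non-informative prior returns
exactly the Sindy estimate: if `Θ = [A B]` has invertible Gram matrix `ΘᵀΘ`,
`Ξ̂ = (ΘᵀΘ)⁻¹Θᵀ y` is the least-squares estimate, and `E = (ΘᵀΘ)⁻¹`, then the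
leading principal block `E₁₁` of `E` is invertible and
`Ξ̂ − E[:,1] E₁₁⁻¹ Ξ̂₁ = (0, (BᵀB)⁻¹Bᵀ y)`. -/
theorem skf_sparsity_update_eq_sindy
    (m d₁ d₂ : ℕ) (hm : 0 < m) (hd₁ : 0 < d₁) (hd₂ : 0 < d₂)
    (A : Matrix (Fin m) (Fin d₁) ℝ) (B : Matrix (Fin m) (Fin d₂) ℝ)
    (Θ : Matrix (Fin m) (Fin d₁ ⊕ Fin d₂) ℝ) (hΘ : Θ = Matrix.fromCols A B)
    (hinv : IsUnit (Θᵀ * Θ).det)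
    (y : Fin m → ℝ)
    (Ξhat : Fin d₁ ⊕ Fin d₂ → ℝ) (hΞ : Ξhat = (Θᵀ * Θ)⁻¹ *ᵥ (Θᵀ *ᵥ y))
    (E : Matrix (Fin d₁ ⊕ Fin d₂) (Fin d₁ ⊕ Fin d₂) ℝ) (hE : E = (Θᵀ * Θ)⁻¹)
    (E₁₁ : Matrix (Fin d₁) (Fin d₁) ℝ) (hE₁₁ : E₁₁ = E.submatrix Sum.inl Sum.inl)
    (Ecol : Matrix (Fin d₁ ⊕ Fin d₂) (Fin d₁) ℝ) (hEcol : Ecol = E.submatrix id Sum.inl) :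
    IsUnit E₁₁.det ∧
      Ξhat - (Ecol * E₁₁⁻¹) *ᵥ (fun i : Fin d₁ => Ξhat (Sum.inl i)) =
        Sum.elim (fun _ : Fin d₁ => (0 : ℝ)) ((Bᵀ * B)⁻¹ *ᵥ (Bᵀ *ᵥ y)) := by
  have hGunit : IsUnit (Θᵀ * Θ) := (Matrix.isUnit_iff_isUnit_det _).mpr hinv
  have hGinj : Function.Injective (Θᵀ * Θ).mulVec :=
    Matrix.mulVec_injective_iff_isUnit.mpr hGunit
  -- Θ is injective
  have hΘinj : Function.Injective Θ.mulVec := by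
    intro a b hab
    apply hGinj
    rw [← mulVec_mulVec, ← mulVec_mulVec, hab]
  -- B is injective
  have hBinj : Function.Injective B.mulVec := by
    intro a b hab
    have h1 : Θ *ᵥ Sum.elim 0 a = Θ *ᵥ Sum.elim 0 b := by
      rw [hΘ, fromCols_mulVec_sumElim, fromCols_mulVec_sumElim]
      simp [hab]
    have h2 := hΘinj h1
    funext i
    have := congrFun h2 (Sum.inr i)
    simpa using this
  have hBBpd : (Bᵀ * B).PosDef := gram_posDef_of_injective B hBinj
  have hBBdet : IsUnit (Bᵀ * B).det := (Matrix.isUnit_iff_isUnit_det _).mp hBBpd.isUnit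
  have hGpd : (Θᵀ * Θ).PosDef := gram_posDef_of_injective Θ hΘinj
  have hEpd : E.PosDef := hE ▸ hGpd.inv
  -- E₁₁ is positive definite
  have hE11pd : E₁₁.PosDef := by
    refine posDef_iff_dotProduct_mulVec.mpr ⟨?_, ?_⟩
    · have hEh := hEpd.isHermitian
      rw [hE₁₁]
      ext i j
      have := congrFun (congrFun hEh (Sum.inl i)) (Sum.inl j)
      simpa [conjTranspose, transpose] using this
    · intro x hx
      have hx' : Sum.elim x (0 : Fin d₂ → ℝ) ≠ 0 := by
        intro h
        apply hx
        funext i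
        simpa using congrFun h (Sum.inl i)
      have hpos := hEpd.dotProduct_mulVec_pos hx'
      have key : star (Sum.elim x (0 : Fin d₂ → ℝ)) ⬝ᵥ E *ᵥ Sum.elim x 0 =
          star x ⬝ᵥ E₁₁ *ᵥ x := by
        simp [hE₁₁, dotProduct, mulVec, Fintype.sum_sum_type, mul_comm]
      rwa [key] at hpos
  have hE11det : IsUnit E₁₁.det := (Matrix.isUnit_iff_isUnit_det _).mp hE11pd.isUnit
  refine ⟨hE11det, ?_⟩
  -- notation
  set ξ₂ : Fin d₂ → ℝ := (Bᵀ * B)⁻¹ *ᵥ (Bᵀ *ᵥ y) with hξ₂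
  set z : Fin d₁ ⊕ Fin d₂ → ℝ := Sum.elim (fun _ : Fin d₁ => (0 : ℝ)) ξ₂ with hz
  set u : Fin d₁ → ℝ := Aᵀ *ᵥ (y - B *ᵥ ξ₂) with hu
  have hGblocks : Θᵀ * Θ = fromBlocks (Aᵀ * A) (Aᵀ * B) (Bᵀ * A) (Bᵀ * B) := by
    rw [hΘ, transpose_fromCols, fromRows_mul_fromCols]
  -- Θᵀ y − G z = (u, 0)
  have hres : Θᵀ *ᵥ y - (Θᵀ * Θ) *ᵥ z = Sum.elim u 0 := by
    rw [hGblocks, hz]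
    funext i
    cases i with
    | inl i =>
      simp [fromBlocks_mulVec, hu, mulVec_sub, mulVec_mulVec, hΘ, transpose_fromCols,
        fromRows_mulVec, show (fun _ : Fin d₁ => (0:ℝ)) = 0 from rfl]
    | inr i =>
      have hcancel : (Bᵀ * B) *ᵥ ξ₂ = Bᵀ *ᵥ y := by
        rw [hξ₂, mulVec_mulVec, Matrix.mul_nonsing_inv _ hBBdet, one_mulVec]
      simp [fromBlocks_mulVec, hcancel, hΘ, transpose_fromCols, fromRows_mulVec,
        show (fun _ : Fin d₁ => (0:ℝ)) = 0 from rfl]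
  -- Ξhat − z = E *ᵥ (u, 0)
  have hEz : E *ᵥ ((Θᵀ * Θ) *ᵥ z) = z := by
    rw [hE, mulVec_mulVec, Matrix.nonsing_inv_mul _ hinv, one_mulVec]
  have hw : Ξhat - z = E *ᵥ Sum.elim u 0 := by
    rw [← hres, mulVec_sub, hEz, hΞ, hE]
  -- E *ᵥ (u,0) = Ecol *ᵥ u
  have hEcolu : E *ᵥ Sum.elim u 0 = Ecol *ᵥ u := by
    funext i
    simp [hEcol, mulVec, dotProduct, Fintype.sum_sum_type]
  -- first block of Ξhat
  have hΞ1 : (fun i : Fin d₁ => Ξhat (Sum.inl i)) = E₁₁ *ᵥ u := by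
    funext i
    have h1 : Ξhat (Sum.inl i) = (Ξhat - z) (Sum.inl i) := by simp [hz]
    rw [h1, hw, hEcolu]
    simp [hE₁₁, hEcol, mulVec, dotProduct]
  -- conclude
  have hmain : (Ecol * E₁₁⁻¹) *ᵥ (fun i : Fin d₁ => Ξhat (Sum.inl i)) = Ξhat - z := by
    have hcan : E₁₁⁻¹ *ᵥ (E₁₁ *ᵥ u) = u := by
      rw [mulVec_mulVec, Matrix.nonsing_inv_mul _ hE11det, one_mulVec]
    rw [hΞ1, ← mulVec_mulVec, hcan, ← hEcolu, ← hw]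
  rw [hmain, sub_sub_cancel]
end

section
/- Let m, d₁, d₂ be positive integers and let Θ = [A B] be a real m × (d₁+d₂) matrix with blocks A ∈ ℝ^{m×d₁} and B ∈ ℝ^{m×d₂}, and suppose ΘᵀΘ is invertible. For y ∈ ℝ^m let Ξ̂ = (ΘᵀΘ)⁻¹Θᵀ y = (Ξ̂₁, Ξ̂₂), and let E = (ΘᵀΘ)⁻¹ with blocks E₁₁ ∈ ℝ^{d₁×d₁} and E₂₁ ∈ ℝ^{d₂×d₁}. Then E₁₁ is invertible and Ξ̂₂ − E₂₁ E₁₁⁻¹ Ξ̂₁ = (BᵀB)⁻¹ Bᵀ y. -/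
open Matrix

lemma myPosDef_of_posSemidef_isUnit {n : Type*} [Fintype n] [DecidableEq n]
    {M : Matrix n n ℝ} (h : M.PosSemidef) (hd : IsUnit M.det) : M.PosDef := by
  exact h.posDef_iff_det_ne_zero.mpr hd.ne_zero

lemma myPosDef_toBlocks₁₁ {n m : Type*} [Fintype n] [Fintype m] [DecidableEq n] [DecidableEq m]
    {M : Matrix (n ⊕ m) (n ⊕ m) ℝ} (hM : M.PosDef) : (M.submatrix Sum.inl Sum.inl).PosDef := by
  refine .of_dotProduct_mulVec_pos (hM.1.submatrix _) fun x hx => ?_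
  have hx' : (Sum.elim x 0 : n ⊕ m → ℝ) ≠ 0 := fun h => hx (funext fun i => congrFun h (Sum.inl i))
  have h := hM.dotProduct_mulVec_pos hx'
  rw [← fromBlocks_toBlocks M, fromBlocks_mulVec] at h
  simp [sumElim_dotProduct_sumElim, toBlocks₁₁] at h
  exact h

lemma myPosDef_toBlocks₂₂ {n m : Type*} [Fintype n] [Fintype m] [DecidableEq n] [DecidableEq m]
    {M : Matrix (n ⊕ m) (n ⊕ m) ℝ} (hM : M.PosDef) : (M.submatrix Sum.inr Sum.inr).PosDef := by
  refine .of_dotProduct_mulVec_pos (hM.1.submatrix _) fun x hx => ?_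
  have hx' : (Sum.elim 0 x : n ⊕ m → ℝ) ≠ 0 := fun h => hx (funext fun i => congrFun h (Sum.inr i))
  have h := hM.dotProduct_mulVec_pos hx'
  rw [← fromBlocks_toBlocks M, fromBlocks_mulVec] at h
  simp [sumElim_dotProduct_sumElim, toBlocks₂₂] at h
  exact h

/-- If `Θ = [A B]` has invertible Gram matrix `ΘᵀΘ`, `Ξ̂ = (ΘᵀΘ)⁻¹Θᵀ y`, and
`E = (ΘᵀΘ)⁻¹`, then `E₁₁` is invertible and
`Ξ̂₂ − E₂₁ E₁₁⁻¹ Ξ̂₁ = (BᵀB)⁻¹ Bᵀ y`. -/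
theorem sindy_restricted_regression_from_blocks
    (m d₁ d₂ : ℕ) (hm : 0 < m) (hd₁ : 0 < d₁) (hd₂ : 0 < d₂)
    (A : Matrix (Fin m) (Fin d₁) ℝ) (B : Matrix (Fin m) (Fin d₂) ℝ)
    (Θ : Matrix (Fin m) (Fin d₁ ⊕ Fin d₂) ℝ) (hΘ : Θ = Matrix.fromCols A B)
    (hinv : IsUnit (Θᵀ * Θ).det)
    (y : Fin m → ℝ)
    (Ξhat : Fin d₁ ⊕ Fin d₂ → ℝ) (hΞ : Ξhat = (Θᵀ * Θ)⁻¹ *ᵥ (Θᵀ *ᵥ y))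
    (E : Matrix (Fin d₁ ⊕ Fin d₂) (Fin d₁ ⊕ Fin d₂) ℝ) (hE : E = (Θᵀ * Θ)⁻¹)
    (E₁₁ : Matrix (Fin d₁) (Fin d₁) ℝ) (hE₁₁ : E₁₁ = E.submatrix Sum.inl Sum.inl)
    (E₂₁ : Matrix (Fin d₂) (Fin d₁) ℝ) (hE₂₁ : E₂₁ = E.submatrix Sum.inr Sum.inl) :
    IsUnit E₁₁.det ∧
      (fun i : Fin d₂ => Ξhat (Sum.inr i)) -
          (E₂₁ * E₁₁⁻¹) *ᵥ (fun i : Fin d₁ => Ξhat (Sum.inl i)) =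
        (Bᵀ * B)⁻¹ *ᵥ (Bᵀ *ᵥ y) := by
  subst hΘ hE hΞ hE₁₁ hE₂₁
  set G := (fromCols A B)ᵀ * fromCols A B with hGdef
  have hGpsd : G.PosSemidef := by
    have heq : (fromCols A B)ᵀ = (fromCols A B)ᴴ := by
      ext i j; simp [conjTranspose_apply]
    rw [hGdef, heq]
    exact posSemidef_conjTranspose_mul_self _
  have hGpd : G.PosDef := myPosDef_of_posSemidef_isUnit hGpsd hinv
  have hEpd : (G⁻¹).PosDef := hGpd.inv
  have hE11pd := myPosDef_toBlocks₁₁ hEpd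
  have hE11 : IsUnit ((G⁻¹).submatrix Sum.inl Sum.inl).det := hE11pd.det_pos.ne'.isUnit
  refine ⟨hE11, ?_⟩
  have hGblocks : G = fromBlocks (Aᵀ*A) (Aᵀ*B) (Bᵀ*A) (Bᵀ*B) := by
    rw [hGdef, transpose_fromCols, fromRows_mul_fromCols]
  have hBBpd : (Bᵀ*B).PosDef := by
    have h := myPosDef_toBlocks₂₂ hGpd
    have : G.submatrix Sum.inr Sum.inr = Bᵀ*B := by
      rw [hGblocks]; ext i j; simp [fromBlocks, submatrix_apply]
    rwa [this] at h
  have hBB : IsUnit (Bᵀ*B).det := hBBpd.det_pos.ne'.isUnit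
  set E := G⁻¹ with hEdef
  have h1 : G * E = 1 := mul_nonsing_inv _ hinv
  set E11 := E.submatrix Sum.inl Sum.inl with hE11def
  set E21 := E.submatrix Sum.inr Sum.inl with hE21def
  have key : Bᵀ*A * E11 + Bᵀ*B * E21 = 0 := by
    have h2 := congrArg Matrix.toBlocks₂₁ h1
    rw [hGblocks, ← fromBlocks_toBlocks E, fromBlocks_multiply, toBlocks_fromBlocks₂₁,
      ← fromBlocks_one, toBlocks_fromBlocks₂₁] at h2
    exact h2
  set w := (fromCols A B)ᵀ *ᵥ y with hwdef
  set u := E *ᵥ w with hudef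
  set u₁ : Fin d₁ → ℝ := fun i => u (Sum.inl i) with hu1
  set u₂ : Fin d₂ → ℝ := fun i => u (Sum.inr i) with hu2
  have huelim : Sum.elim u₁ u₂ = u := by funext i; cases i <;> rfl
  have hGu : G *ᵥ u = w := by rw [hudef, mulVec_mulVec, h1, one_mulVec]
  have hnorm : (Bᵀ*A) *ᵥ u₁ + (Bᵀ*B) *ᵥ u₂ = Bᵀ *ᵥ y := by
    have h3 := hGu
    rw [← huelim, hGblocks, fromBlocks_mulVec, hwdef, transpose_fromCols,
      fromRows_mulVec] at h3
    exact funext fun i => congrFun h3 (Sum.inr i)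
  have hM : Bᵀ*B * (E21 * E11⁻¹) = -(Bᵀ*A) := by
    have h4 : Bᵀ*B*E21 = -(Bᵀ*A*E11) := eq_neg_of_add_eq_zero_right key
    rw [← Matrix.mul_assoc, h4, Matrix.neg_mul, Matrix.mul_assoc, mul_nonsing_inv _ hE11, Matrix.mul_one]
  have hkey : (Bᵀ*B) *ᵥ (u₂ - (E21 * E11⁻¹) *ᵥ u₁) = Bᵀ *ᵥ y := by
    rw [mulVec_sub, mulVec_mulVec, hM, neg_mulVec, sub_neg_eq_add, add_comm, hnorm]
  have h5 := congrArg (fun v => (Bᵀ*B)⁻¹ *ᵥ v) hkey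
  simp only [mulVec_mulVec, nonsing_inv_mul _ hBB, one_mulVec] at h5
  exact h5.trans (by rw [← mulVec_mulVec])
end

section
/- Let B be a real m × d matrix such that BᵀB is invertible. Then, as γ → ∞ (along the filter atTop on ℝ restricted to γ > 0), γ Bᵀ (γ B Bᵀ + I_m)⁻¹ converges to (BᵀB)⁻¹ Bᵀ (entrywise, equivalently in any matrix norm). In particular, for every y ∈ ℝ^m, γ Bᵀ (γ B Bᵀ + I_m)⁻¹ y converges to the least-squares estimate (BᵀB)⁻¹ Bᵀ y. -/
open Matrix Filter

private lemma psd_smul_real {m : ℕ} {A : Matrix (Fin m) (Fin m) ℝ}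
    (hA : A.PosSemidef) {γ : ℝ} (hγ : 0 ≤ γ) : (γ • A).PosSemidef := by
  refine ⟨?_, fun x => ?_⟩
  · unfold Matrix.IsHermitian
    rw [conjTranspose_smul, hA.1]
    simp
  · exact (hA.smul hγ).2 x

private lemma key_eq {m d : ℕ} (B : Matrix (Fin m) (Fin d) ℝ) {γ : ℝ} (hγ : 0 < γ) :
    γ • (Bᵀ * (γ • (B * Bᵀ) + (1 : Matrix (Fin m) (Fin m) ℝ))⁻¹)
      = (Bᵀ * B + γ⁻¹ • (1 : Matrix (Fin d) (Fin d) ℝ))⁻¹ * Bᵀ := by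
  set M : Matrix (Fin m) (Fin m) ℝ := γ • (B * Bᵀ) + 1 with hM
  set N : Matrix (Fin d) (Fin d) ℝ := γ • (Bᵀ * B) + 1 with hN
  have hMpd : M.PosDef := by
    refine Matrix.PosDef.posSemidef_add ?_ Matrix.PosDef.one
    exact psd_smul_real (by simpa using Matrix.posSemidef_self_mul_conjTranspose B) hγ.le
  have hNpd : N.PosDef := by
    refine Matrix.PosDef.posSemidef_add ?_ Matrix.PosDef.one
    exact psd_smul_real (by simpa using Matrix.posSemidef_conjTranspose_mul_self B) hγ.le
  have hMdet : IsUnit M.det := hMpd.det_pos.ne'.isUnit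
  have hNdet : IsUnit N.det := hNpd.det_pos.ne'.isUnit
  have hcomm : Bᵀ * M = N * Bᵀ := by
    rw [hM, hN, Matrix.mul_add, Matrix.add_mul, Matrix.mul_one, Matrix.one_mul,
      Matrix.mul_smul, Matrix.smul_mul, Matrix.mul_assoc]
  have hswap : Bᵀ * M⁻¹ = N⁻¹ * Bᵀ := by
    have h1 : Bᵀ = N⁻¹ * (Bᵀ * M) := by
      rw [hcomm, ← Matrix.mul_assoc, Matrix.nonsing_inv_mul _ hNdet, Matrix.one_mul]
    calc Bᵀ * M⁻¹ = N⁻¹ * (Bᵀ * M) * M⁻¹ := by rw [← h1]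
    _ = N⁻¹ * Bᵀ * (M * M⁻¹) := by rw [Matrix.mul_assoc, Matrix.mul_assoc, Matrix.mul_assoc]
    _ = N⁻¹ * Bᵀ := by rw [Matrix.mul_nonsing_inv _ hMdet, Matrix.mul_one]
  have hNinv : (Bᵀ * B + γ⁻¹ • (1 : Matrix (Fin d) (Fin d) ℝ))⁻¹ = γ • N⁻¹ := by
    have h2 : Bᵀ * B + γ⁻¹ • (1 : Matrix (Fin d) (Fin d) ℝ) = γ⁻¹ • N := by
      rw [hN, smul_add, smul_smul, inv_mul_cancel₀ hγ.ne', one_smul]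
    rw [h2]
    refine Matrix.inv_eq_right_inv ?_
    rw [Matrix.smul_mul, Matrix.mul_smul, Matrix.mul_nonsing_inv _ hNdet, smul_smul,
      inv_mul_cancel₀ hγ.ne', one_smul]
  rw [hswap, hNinv, Matrix.smul_mul]

/-- Non-informative prior limit of the Bayesian linear estimator gain: if `BᵀB` is
invertible, then `γ Bᵀ (γ B Bᵀ + I)⁻¹ → (BᵀB)⁻¹ Bᵀ` as `γ → ∞` (along `atTop`
restricted to `γ > 0`), and consequently `γ Bᵀ (γ B Bᵀ + I)⁻¹ y → (BᵀB)⁻¹ Bᵀ y`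
for every `y`. -/
theorem bayes_gain_tendsto_least_squares
    (m d : ℕ) (B : Matrix (Fin m) (Fin d) ℝ)
    (hinv : IsUnit (Bᵀ * B).det) :
    Tendsto (fun γ : ℝ => γ • (Bᵀ * (γ • (B * Bᵀ) + (1 : Matrix (Fin m) (Fin m) ℝ))⁻¹))
        (atTop ⊓ Filter.principal {γ : ℝ | 0 < γ}) (nhds ((Bᵀ * B)⁻¹ * Bᵀ)) ∧
      ∀ y : Fin m → ℝ,
        Tendsto
          (fun γ : ℝ =>
            (γ • (Bᵀ * (γ • (B * Bᵀ) + (1 : Matrix (Fin m) (Fin m) ℝ))⁻¹)) *ᵥ y)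
          (atTop ⊓ Filter.principal {γ : ℝ | 0 < γ})
          (nhds (((Bᵀ * B)⁻¹ * Bᵀ) *ᵥ y)) := by
  have hmain :
      Tendsto (fun γ : ℝ => γ • (Bᵀ * (γ • (B * Bᵀ) + (1 : Matrix (Fin m) (Fin m) ℝ))⁻¹))
        (atTop ⊓ Filter.principal {γ : ℝ | 0 < γ}) (nhds ((Bᵀ * B)⁻¹ * Bᵀ)) := by
    have heq :
        (fun γ : ℝ => γ • (Bᵀ * (γ • (B * Bᵀ) + (1 : Matrix (Fin m) (Fin m) ℝ))⁻¹))
          =ᶠ[atTop ⊓ Filter.principal {γ : ℝ | 0 < γ}]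
        (fun γ : ℝ => (Bᵀ * B + γ⁻¹ • (1 : Matrix (Fin d) (Fin d) ℝ))⁻¹ * Bᵀ) := by
      filter_upwards [mem_inf_of_right (mem_principal_self _)] with γ hγ
      exact key_eq B hγ
    refine Tendsto.congr' heq.symm ?_
    have h1 : Tendsto (fun γ : ℝ => Bᵀ * B + γ⁻¹ • (1 : Matrix (Fin d) (Fin d) ℝ))
        (atTop ⊓ Filter.principal {γ : ℝ | 0 < γ}) (nhds (Bᵀ * B)) := by
      have hγ : Tendsto (fun γ : ℝ => γ⁻¹) (atTop ⊓ Filter.principal {γ : ℝ | 0 < γ})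
          (nhds 0) := tendsto_inv_atTop_zero.mono_left inf_le_left
      have := (tendsto_const_nhds :
          Tendsto (fun _ : ℝ => Bᵀ * B) (atTop ⊓ Filter.principal {γ : ℝ | 0 < γ})
            (nhds (Bᵀ * B))).add (hγ.smul_const (1 : Matrix (Fin d) (Fin d) ℝ))
      simpa using this
    have h2 : ContinuousAt Inv.inv (Bᵀ * B) := by
      refine continuousAt_matrix_inv _ ?_
      rw [Ring.inverse_eq_inv']
      exact continuousAt_inv₀ hinv.ne_zero
    have h3 : Tendsto (fun γ : ℝ => (Bᵀ * B + γ⁻¹ • (1 : Matrix (Fin d) (Fin d) ℝ))⁻¹)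
        (atTop ⊓ Filter.principal {γ : ℝ | 0 < γ}) (nhds ((Bᵀ * B)⁻¹)) := h2.tendsto.comp h1
    have h4 : Continuous fun A : Matrix (Fin d) (Fin d) ℝ => A * Bᵀ :=
      continuous_id.matrix_mul continuous_const
    exact (h4.tendsto _).comp h3
  refine ⟨hmain, fun y => ?_⟩
  have hc : Continuous fun A : Matrix (Fin d) (Fin m) ℝ => A *ᵥ y :=
    continuous_id.matrix_mulVec continuous_const
  exact (hc.tendsto _).comp hmain
end

section
/- Let d be a positive integer, P a real symmetric positive definite d × d matrix, c > 0, and t̄ a positive integer. Let (G_t)_{t≥1} be a sequence of real symmetric positive definite d × d matrices such that G_t − c·t·I_d is positive semidefinite for all t ≥ t̄, and let (b_t)_{t≥1} be vectors in ℝ^d such that the batch least-squares estimates ξ̂_t = G_t⁻¹ b_t are bounded in norm (there is C with ‖G_t⁻¹ b_t‖ ≤ C for all t). Then ‖(G_t + P⁻¹)⁻¹ b_t − G_t⁻¹ b_t‖ → 0 as t → ∞; i.e., the effect of any informative prior covariance P on the estimates vanishes asymptotically, so SKF with an informative prior is asymptotically equivalent to Sindy in the time-invariant case. -/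
open Matrix Filter

namespace InfPriorAux

noncomputable def N {d : ℕ} (v : Fin d → ℝ) : ℝ := Real.sqrt (∑ i, v i ^ 2)

variable {d : ℕ}

lemma N_nonneg (v : Fin d → ℝ) : 0 ≤ N v := Real.sqrt_nonneg _

lemma sq_N (v : Fin d → ℝ) : N v ^ 2 = ∑ i, v i ^ 2 :=
  Real.sq_sqrt (by positivity)

lemma dot_self (v : Fin d → ℝ) : v ⬝ᵥ v = N v ^ 2 := by
  rw [sq_N]; simp [dotProduct, sq]

lemma cauchy (v w : Fin d → ℝ) : v ⬝ᵥ w ≤ N v * N w := by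
  simpa [dotProduct, N] using
    Real.sum_mul_le_sqrt_mul_sqrt Finset.univ v w

lemma N_neg (v : Fin d → ℝ) : N (-v) = N v := by
  simp [N]

/-- Frobenius-type bound for `mulVec`. -/
lemma mulVec_N_le (M : Matrix (Fin d) (Fin d) ℝ) (v : Fin d → ℝ) :
    N (M *ᵥ v) ≤ Real.sqrt (∑ i, ∑ j, M i j ^ 2) * N v := by
  rw [N, N, ← Real.sqrt_mul (by positivity)]
  apply Real.sqrt_le_sqrt
  rw [Finset.sum_mul]
  refine Finset.sum_le_sum fun i _ => ?_
  have : (M *ᵥ v) i = ∑ j, M i j * v j := by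
    simp [Matrix.mulVec, dotProduct]
  rw [this]
  exact Finset.sum_mul_sq_le_sq_mul_sq _ _ _

/-- If `A ⪰ μ·I` with `μ > 0` then `‖A⁻¹ x‖ ≤ μ⁻¹ ‖x‖`. -/
lemma inv_mulVec_N_le (A : Matrix (Fin d) (Fin d) ℝ) (hA : A.PosDef) {μ : ℝ}
    (hμ : 0 < μ) (hle : (A - μ • (1 : Matrix (Fin d) (Fin d) ℝ)).PosSemidef)
    (x : Fin d → ℝ) : N (A⁻¹ *ᵥ x) ≤ μ⁻¹ * N x := by
  set y := A⁻¹ *ᵥ x with hy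
  have hAy : A *ᵥ y = x := by
    rw [hy, Matrix.mulVec_mulVec, Matrix.mul_nonsing_inv _ hA.det_pos.ne'.isUnit,
      Matrix.one_mulVec]
  have key : μ * N y ^ 2 ≤ y ⬝ᵥ x := by
    have h0 := hle.dotProduct_mulVec_nonneg y
    simp only [Matrix.sub_mulVec, dotProduct_sub, star_trivial,
      Matrix.smul_mulVec, Matrix.one_mulVec, dotProduct_smul,
      smul_eq_mul, sub_nonneg, hAy] at h0
    calc μ * N y ^ 2 = μ * (y ⬝ᵥ y) := by rw [dot_self]
    _ ≤ y ⬝ᵥ x := h0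
  have hcs : y ⬝ᵥ x ≤ N y * N x := cauchy y x
  rcases eq_or_lt_of_le (N_nonneg y) with h | h
  · rw [← h]; exact mul_nonneg (inv_nonneg.mpr hμ.le) (N_nonneg x)
  · have h2 : μ * N y ≤ N x := by nlinarith [sq_nonneg (N y)]
    calc N y = μ⁻¹ * (μ * N y) := by field_simp
    _ ≤ μ⁻¹ * N x := mul_le_mul_of_nonneg_left h2 (inv_nonneg.mpr hμ.le)
    
end InfPriorAux

open InfPriorAux

/-- The effect of any informative prior covariance `P` vanishes asymptotically:
under persistency of excitation (`G_t ⪰ c·t·I` for `t ≥ t̄`) and boundedness of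
the batch least-squares estimates `G_t⁻¹ b_t`, the difference between the
informative-prior estimate `(G_t + P⁻¹)⁻¹ b_t` and the least-squares estimate
`G_t⁻¹ b_t` tends to zero in Euclidean norm, so SKF with an informative prior is
asymptotically equivalent to Sindy in the time-invariant case. -/
theorem informative_prior_effect_vanishes
    (d : ℕ) (hd : 0 < d)
    (P : Matrix (Fin d) (Fin d) ℝ) (hP : P.PosDef)
    (c : ℝ) (hc : 0 < c) (tbar : ℕ) (htbar : 0 < tbar)
    (G : ℕ → Matrix (Fin d) (Fin d) ℝ)
    (hGpd : ∀ t ≥ 1, (G t).PosDef)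
    (hPE : ∀ t ≥ tbar,
      (G t - (c * (t : ℝ)) • (1 : Matrix (Fin d) (Fin d) ℝ)).PosSemidef)
    (b : ℕ → Fin d → ℝ) (C : ℝ)
    (hbound : ∀ t ≥ 1, Real.sqrt (∑ i, ((G t)⁻¹ *ᵥ b t) i ^ 2) ≤ C) :
    Tendsto (fun t : ℕ =>
        Real.sqrt (∑ i, (((G t + P⁻¹)⁻¹ *ᵥ b t - (G t)⁻¹ *ᵥ b t) i) ^ 2))
      atTop (nhds 0) := by
  have hC : 0 ≤ C := le_trans (Real.sqrt_nonneg _) (hbound 1 le_rfl)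
  set Kf : ℝ := Real.sqrt (∑ i, ∑ j, (P⁻¹) i j ^ 2) with hKf
  have hKf0 : 0 ≤ Kf := Real.sqrt_nonneg _
  -- the main pointwise bound
  have key : ∀ t : ℕ, max tbar 1 ≤ t →
      N ((G t + P⁻¹)⁻¹ *ᵥ b t - (G t)⁻¹ *ᵥ b t) ≤ (c * t)⁻¹ * (Kf * C) := by
    intro t ht
    have ht1 : 1 ≤ t := le_trans (le_max_right _ _) ht
    have httbar : tbar ≤ t := le_trans (le_max_left _ _) ht
    have hB : (G t).PosDef := hGpd t ht1
    have hA : (G t + P⁻¹).PosDef := hB.add hP.inv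
    set ξ : Fin d → ℝ := (G t)⁻¹ *ᵥ b t with hξ
    have hct : 0 < c * (t : ℝ) := by
      have : (0 : ℝ) < t := by exact_mod_cast ht1
      positivity
    -- PE for G t + P⁻¹
    have hle : ((G t + P⁻¹) - (c * (t : ℝ)) • (1 : Matrix (Fin d) (Fin d) ℝ)).PosSemidef := by
      have := (hPE t httbar).add hP.inv.posSemidef
      have heq : G t - (c * (t : ℝ)) • (1 : Matrix (Fin d) (Fin d) ℝ) + P⁻¹
          = (G t + P⁻¹) - (c * (t : ℝ)) • (1 : Matrix (Fin d) (Fin d) ℝ) := by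
        abel
      rwa [heq] at this
    -- the identity
    have hinv : (G t + P⁻¹)⁻¹ * ((G t + P⁻¹)) = 1 :=
      Matrix.nonsing_inv_mul _ hA.det_pos.ne'.isUnit
    have hinvB : G t * (G t)⁻¹ = 1 :=
      Matrix.mul_nonsing_inv _ hB.det_pos.ne'.isUnit
    have hid : (G t + P⁻¹)⁻¹ - (G t)⁻¹
        = (G t + P⁻¹)⁻¹ * (G t - (G t + P⁻¹)) * (G t)⁻¹ := by
      rw [Matrix.mul_sub, Matrix.sub_mul, Matrix.mul_assoc, hinvB, Matrix.mul_one,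
        hinv, Matrix.one_mul]
    have hBA : G t - (G t + P⁻¹) = -P⁻¹ := by abel
    have hvec : (G t + P⁻¹)⁻¹ *ᵥ b t - (G t)⁻¹ *ᵥ b t
        = -((G t + P⁻¹)⁻¹ *ᵥ (P⁻¹ *ᵥ ξ)) := by
      rw [← Matrix.sub_mulVec, hid, hBA, hξ, ← Matrix.mulVec_mulVec,
        ← Matrix.mulVec_mulVec, Matrix.neg_mulVec, Matrix.mulVec_neg]
    rw [hvec, N_neg]
    calc N ((G t + P⁻¹)⁻¹ *ᵥ (P⁻¹ *ᵥ ξ)) ≤ (c * t)⁻¹ * N (P⁻¹ *ᵥ ξ) :=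
      inv_mulVec_N_le _ hA hct hle _
    _ ≤ (c * t)⁻¹ * (Kf * N ξ) :=
      mul_le_mul_of_nonneg_left (mulVec_N_le _ _) (inv_nonneg.mpr hct.le)
    _ ≤ (c * t)⁻¹ * (Kf * C) := by
      have : N ξ ≤ C := hbound t ht1
      have := mul_le_mul_of_nonneg_left this hKf0
      exact mul_le_mul_of_nonneg_left this (inv_nonneg.mpr hct.le)
  -- squeeze
  have hg : Tendsto (fun t : ℕ => (c * (t : ℝ))⁻¹ * (Kf * C)) atTop (nhds 0) := by
    have h1 : Tendsto (fun t : ℕ => ((t : ℝ))⁻¹) atTop (nhds 0) :=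
      tendsto_inv_atTop_nhds_zero_nat
    have h2 : Tendsto (fun t : ℕ => c⁻¹ * ((t : ℝ))⁻¹ * (Kf * C)) atTop
        (nhds (c⁻¹ * 0 * (Kf * C))) := (h1.const_mul c⁻¹).mul_const _
    simp only [mul_zero, zero_mul] at h2
    convert h2 using 2 with t
    rw [mul_inv]
  refine squeeze_zero' ?_ ?_ hg
  · exact Eventually.of_forall fun t => N_nonneg _
  · filter_upwards [eventually_ge_atTop (max tbar 1)] with t ht using key t ht
end
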